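/- arXiv:2202.05810 — 5 statements merged into one kernel-verified Lean document; each statement's English description precedes it below -/
import Mathlib

section
/- For every s in the open interval (0,1) and every real λ > 0, the following integral representation holds: λ^{-s} = (2 sin(πs)/π) ∫_{-∞}^{+∞} e^{2sy} (1 + e^{2y} λ)^{-1} dy. -/
/-!
The affine substitution `x = 2y + log λ` turns the integral into `λ^{-s}/2 · ∫ e^{sx} / (1 + e^x) dx`.
The logistic substitution `t = σ(x) = e^x / (1 + e^x)` maps `ℝ` onto `(0, 1)` with `σ' = σ(1 - σ)`,
and turns this into the Beta integral `B(s, 1 - s) = Γ(s) Γ(1 - s) = π / sin (π s)`, by Euler's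
reflection formula.
-/

open Real MeasureTheory

theorem integral_rpow_mul_one_sub_rpow_neg {s : ℝ} (h0 : 0 < s) (h1 : s < 1) :
    ∫ x in (0 : ℝ)..1, x ^ (s - 1) * (1 - x) ^ (-s) = π / sin (π * s) := by
  have hbeta : Complex.betaIntegral s (1 - s) = π / Complex.sin (π * s) := by
    have h := Complex.Gamma_mul_Gamma_eq_betaIntegral (s := (s : ℂ)) (t := 1 - (s : ℂ))
      (by simpa using h0) (by simpa using h1)
    rwa [add_sub_cancel, Complex.Gamma_one, one_mul, Complex.Gamma_mul_Gamma_one_sub, eq_comm] at h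
  have hreal : Complex.betaIntegral s (1 - s) =
      ((∫ x in (0 : ℝ)..1, x ^ (s - 1) * (1 - x) ^ (-s) : ℝ) : ℂ) := by
    rw [Complex.betaIntegral, ← intervalIntegral.integral_ofReal]
    refine intervalIntegral.integral_congr fun x hx => ?_
    rw [Set.uIcc_of_le zero_le_one] at hx
    push_cast
    rw [Complex.ofReal_cpow hx.1, Complex.ofReal_cpow (sub_nonneg.2 hx.2)]
    push_cast
    ring_nf
  have hcast : ((π / sin (π * s) : ℝ) : ℂ) = π / Complex.sin (π * s) := by push_cast; rfl
  exact_mod_cast hreal.symm.trans (hbeta.trans hcast.symm)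

theorem Real.sigmoid_rpow_mul_one_sub_sigmoid_rpow (s x : ℝ) :
    sigmoid x ^ s * (1 - sigmoid x) ^ (1 - s) = exp (s * x) / (1 + exp x) := by
  have hσ : sigmoid x = exp x * (1 + exp x)⁻¹ := by
    rw [sigmoid_def, exp_neg]
    field_simp
    ring
  have hσ' : 1 - sigmoid x = (1 + exp x)⁻¹ := by
    rw [hσ]
    field_simp
    ring
  have hw : 0 < (1 + exp x)⁻¹ := by positivity
  rw [hσ', hσ, mul_rpow (exp_pos x).le hw.le, mul_assoc, ← rpow_add hw, add_sub_cancel,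
    rpow_one, ← exp_mul, mul_comm x s, div_eq_mul_inv]

theorem integral_exp_mul_div_one_add_exp {s : ℝ} (h0 : 0 < s) (h1 : s < 1) :
    ∫ x, exp (s * x) / (1 + exp x) = π / sin (π * s) := by
  have hcov := integral_image_eq_integral_abs_deriv_smul MeasurableSet.univ
    (fun x _ => (hasDerivAt_sigmoid x).hasDerivWithinAt) sigmoid_injective.injOn
    (fun t => t ^ (s - 1) * (1 - t) ^ (-s))
  rw [Set.image_univ, range_sigmoid, Measure.restrict_univ] at hcov
  rw [← integral_rpow_mul_one_sub_rpow_neg h0 h1, intervalIntegral.integral_of_le zero_le_one,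
    integral_Ioc_eq_integral_Ioo, hcov]
  congr 1 with x
  have hσ := sigmoid_pos x
  have hσ' : 0 < 1 - sigmoid x := sub_pos.2 (sigmoid_lt_one x)
  rw [← sigmoid_rpow_mul_one_sub_sigmoid_rpow, abs_of_pos (mul_pos hσ hσ'), smul_eq_mul,
    rpow_sub_one hσ.ne', rpow_sub hσ', rpow_one, rpow_neg hσ'.le]
  field_simp

theorem balakrishnan_integral_representation
    (s : ℝ) (hs : s ∈ Set.Ioo (0 : ℝ) 1) (lam : ℝ) (hlam : 0 < lam) :
    lam ^ (-s) =
      (2 * Real.sin (Real.pi * s) / Real.pi) *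
        ∫ y : ℝ, Real.exp (2 * s * y) * (1 + Real.exp (2 * y) * lam)⁻¹ := by
  set F : ℝ → ℝ := fun x => exp (s * x) / (1 + exp x)
  have hshift : ∀ y, exp (2 * s * y) * (1 + exp (2 * y) * lam)⁻¹ =
      lam ^ (-s) * F (2 * y + log lam) := by
    intro y
    simp only [F]
    rw [exp_add, exp_log hlam, mul_add, exp_add, mul_comm s (log lam), ← rpow_def_of_pos hlam,
      rpow_neg hlam.le, ← mul_assoc s 2 y, mul_comm s 2]
    field_simp [(rpow_pos_of_pos hlam s).ne']
  have hsin : sin (π * s) ≠ 0 :=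
    (sin_pos_of_pos_of_lt_pi (by nlinarith [pi_pos, hs.1]) (by nlinarith [pi_pos, hs.2])).ne'
  simp_rw [hshift]
  rw [integral_const_mul, Measure.integral_comp_mul_left (fun x => F (x + log lam)),
    integral_add_right_eq_self, integral_exp_mul_div_one_add_exp hs.1 hs.2,
    abs_of_pos (by norm_num : (0 : ℝ) < 2⁻¹), smul_eq_mul, mul_left_comm,
    show 2 * sin (π * s) / π * (2⁻¹ * (π / sin (π * s))) = 1 by field_simp, mul_one]
end

section
/- Let s ∈ (0,1), κ > 0, M(κ) = ⌈π²/(4sκ²)⌉, and λ > 0. Then the lower truncation tail of the Balakrishnan integral satisfies (2 sin(πs)/π) ∫_{-∞}^{-M(κ)κ} e^{2sy}(1 + e^{2y}λ)^{-1} dy ≤ (sin(πs)/(πs)) e^{-π²/(2κ)}. -/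
open Real MeasureTheory

/-!
Since `λ ≥ 0`, the factor `(1 + e^{2y} λ)⁻¹` is at most `1`, so the tail is bounded by
`∫_{-∞}^{a} e^{2sy} dy = e^{2sa} / (2s)`; the ceiling in `M(κ)` is chosen exactly so that
`2s · M(κ) κ ≥ π² / (2κ)`.
-/

theorem setIntegral_exp_mul_mul_le_of_le_one {b : ℝ} (hb : 0 < b) (c : ℝ) {g : ℝ → ℝ}
    (hg_nonneg : ∀ y, 0 ≤ g y) (hg_le_one : ∀ y, g y ≤ 1) :
    ∫ y in Set.Iic c, exp (b * y) * g y ≤ exp (b * c) / b := by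
  rw [← integral_exp_mul_Iic hb c]
  refine integral_mono_of_nonneg (.of_forall fun y => by have := hg_nonneg y; positivity)
    (integrableOn_exp_mul_Iic hb c) (.of_forall fun y => ?_)
  exact mul_le_of_le_one_right (exp_pos _).le (hg_le_one y)

theorem le_mul_ceil_div {c : ℝ} (hc : 0 < c) (x : ℝ) : x ≤ c * ⌈x / c⌉ := by
  rw [← div_le_iff₀' hc]
  exact Int.le_ceil _

theorem balakrishnan_lower_tail_bound
    (s : ℝ) (hs : s ∈ Set.Ioo (0 : ℝ) 1) (κ : ℝ) (hκ : 0 < κ)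
    (lam : ℝ) (hlam : 0 < lam) :
    (2 * Real.sin (Real.pi * s) / Real.pi) *
        ∫ y in Set.Iic (-(((⌈Real.pi ^ 2 / (4 * s * κ ^ 2)⌉ : ℤ) : ℝ) * κ)),
          Real.exp (2 * s * y) * (1 + Real.exp (2 * y) * lam)⁻¹
      ≤ (Real.sin (Real.pi * s) / (Real.pi * s)) * Real.exp (-Real.pi ^ 2 / (2 * κ)) := by
  obtain ⟨hs0, hs1⟩ := hs
  set a := -(((⌈π ^ 2 / (4 * s * κ ^ 2)⌉ : ℤ) : ℝ) * κ)
  have hsin : 0 < sin (π * s) := sin_pos_of_pos_of_lt_pi (by positivity) (by nlinarith [pi_pos])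
  have htail : ∫ y in Set.Iic a, exp (2 * s * y) * (1 + exp (2 * y) * lam)⁻¹
      ≤ exp (2 * s * a) / (2 * s) :=
    setIntegral_exp_mul_mul_le_of_le_one (by positivity) a (fun y => by positivity)
      fun y => inv_le_one_of_one_le₀ (le_add_of_nonneg_right (by positivity))
  have hcut : 2 * s * a ≤ -π ^ 2 / (2 * κ) := by
    have h := le_mul_ceil_div (c := 2 * s * κ) (by positivity) (π ^ 2 / (2 * κ))
    rw [show π ^ 2 / (2 * κ) / (2 * s * κ) = π ^ 2 / (4 * s * κ ^ 2) by field_simp; ring] at h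
    rw [neg_div]
    linarith
  calc (2 * sin (π * s) / π) * ∫ y in Set.Iic a, exp (2 * s * y) * (1 + exp (2 * y) * lam)⁻¹
      ≤ (2 * sin (π * s) / π) * (exp (2 * s * a) / (2 * s)) := by gcongr
    _ = (sin (π * s) / (π * s)) * exp (2 * s * a) := by field_simp
    _ ≤ (sin (π * s) / (π * s)) * exp (-π ^ 2 / (2 * κ)) := by gcongr
end

section
/- Let s ∈ (0,1), κ > 0, N(κ) = ⌈π²/(4(1-s)κ²)⌉, λ₀ > 0 and λ ≥ λ₀. Then the upper truncation tail of the Balakrishnan integral satisfies (2 sin(πs)/π) ∫_{N(κ)κ}^{+∞} e^{2sy}(1 + e^{2y}λ)^{-1} dy ≤ (sin(πs)/(π(1-s)λ₀)) e^{-π²/(2κ)}. -/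
open Real MeasureTheory

/-! For `λ ≥ λ₀` the integrand is at most `e^{-2(1-s)y} / λ₀`, whose tail integral over
`[Nκ, ∞)` is `e^{-2(1-s)Nκ} / (2(1-s)λ₀)`; the choice of `N = N(κ)` makes
`2(1-s)Nκ ≥ π²/(2κ)`. -/

lemma balakrishnan_integrand_le {lam₀ lam : ℝ} (hlam₀ : 0 < lam₀) (hlam : lam₀ ≤ lam)
    (s y : ℝ) :
    exp (2 * s * y) * (1 + exp (2 * y) * lam)⁻¹ ≤ exp (2 * (s - 1) * y) / lam₀ := by
  have hdenom : exp (2 * y) * lam₀ ≤ 1 + exp (2 * y) * lam := by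
    nlinarith [exp_pos (2 * y)]
  calc exp (2 * s * y) * (1 + exp (2 * y) * lam)⁻¹
      ≤ exp (2 * s * y) * (exp (2 * y) * lam₀)⁻¹ := by gcongr
    _ = exp (2 * (s - 1) * y) / lam₀ := by
      rw [mul_inv, ← exp_neg, ← mul_assoc, ← exp_add]
      ring_nf

lemma setIntegral_Ici_balakrishnan_integrand_le {s lam₀ lam : ℝ} (hs : s < 1)
    (hlam₀ : 0 < lam₀) (hlam : lam₀ ≤ lam) (a : ℝ) :
    ∫ y in Set.Ici a, exp (2 * s * y) * (1 + exp (2 * y) * lam)⁻¹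
      ≤ exp (2 * (s - 1) * a) / (2 * (1 - s) * lam₀) := by
  have hrate : 2 * (s - 1) < 0 := by linarith
  have hlam_pos : 0 < lam := hlam₀.trans_le hlam
  have hdom : IntegrableOn (fun y => exp (2 * (s - 1) * y) / lam₀) (Set.Ici a) :=
    Iff.mpr integrableOn_Ici_iff_integrableOn_Ioi ((integrableOn_exp_mul_Ioi hrate a).div_const _)
  have hint : IntegrableOn (fun y => exp (2 * s * y) * (1 + exp (2 * y) * lam)⁻¹)
      (Set.Ici a) := by
    refine hdom.integrable.mono' (by fun_prop (disch := intro y; positivity)) ?_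
    filter_upwards with y
    rw [norm_of_nonneg (by positivity)]
    exact balakrishnan_integrand_le hlam₀ hlam s y
  calc ∫ y in Set.Ici a, exp (2 * s * y) * (1 + exp (2 * y) * lam)⁻¹
      ≤ ∫ y in Set.Ici a, exp (2 * (s - 1) * y) / lam₀ :=
        setIntegral_mono_on hint hdom measurableSet_Ici
          fun y _ => balakrishnan_integrand_le hlam₀ hlam s y
    _ = exp (2 * (s - 1) * a) / (2 * (1 - s) * lam₀) := by
      rw [integral_Ici_eq_integral_Ioi, integral_div, integral_exp_mul_Ioi hrate]
      have : 1 - s ≠ 0 := by linarith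
      have : s - 1 ≠ 0 := by linarith
      field_simp
      ring

lemma two_mul_sub_one_mul_ceil_mul_le {s κ : ℝ} (hs : s < 1) (hκ : 0 < κ) :
    2 * (s - 1) * (((⌈π ^ 2 / (4 * (1 - s) * κ ^ 2)⌉ : ℤ) : ℝ) * κ) ≤ -π ^ 2 / (2 * κ) := by
  have h1s : 0 < 1 - s := by linarith
  have hceil := (div_le_iff₀ (by positivity)).mp (Int.le_ceil (π ^ 2 / (4 * (1 - s) * κ ^ 2)))
  rw [neg_div, le_neg, div_le_iff₀ (by positivity)]
  nlinarith

theorem balakrishnan_upper_tail_bound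
    (s : ℝ) (hs : s ∈ Set.Ioo (0 : ℝ) 1) (κ : ℝ) (hκ : 0 < κ)
    (lam₀ : ℝ) (hlam₀ : 0 < lam₀) (lam : ℝ) (hlam : lam₀ ≤ lam) :
    (2 * Real.sin (Real.pi * s) / Real.pi) *
        ∫ y in Set.Ici (((⌈Real.pi ^ 2 / (4 * (1 - s) * κ ^ 2)⌉ : ℤ) : ℝ) * κ),
          Real.exp (2 * s * y) * (1 + Real.exp (2 * y) * lam)⁻¹
      ≤ (Real.sin (Real.pi * s) / (Real.pi * (1 - s) * lam₀)) * Real.exp (-Real.pi ^ 2 / (2 * κ)) := by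
  obtain ⟨hs0, hs1⟩ := hs
  set a : ℝ := ((⌈π ^ 2 / (4 * (1 - s) * κ ^ 2)⌉ : ℤ) : ℝ) * κ
  have h1s : 0 < 1 - s := by linarith
  have hsin : 0 ≤ sin (π * s) :=
    sin_nonneg_of_nonneg_of_le_pi (by positivity) (by nlinarith [pi_pos])
  calc (2 * sin (π * s) / π) * ∫ y in Set.Ici a, exp (2 * s * y) * (1 + exp (2 * y) * lam)⁻¹
      ≤ (2 * sin (π * s) / π) * (exp (2 * (s - 1) * a) / (2 * (1 - s) * lam₀)) := by
        gcongr
        exact setIntegral_Ici_balakrishnan_integrand_le hs1 hlam₀ hlam a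
    _ = (sin (π * s) / (π * (1 - s) * lam₀)) * exp (2 * (s - 1) * a) := by
        field_simp
    _ ≤ (sin (π * s) / (π * (1 - s) * lam₀)) * exp (-π ^ 2 / (2 * κ)) := by
        gcongr
        exact two_mul_sub_one_mul_ceil_mul_le hs1 hκ
end

section
/- Let H be a real Hilbert space with a Hilbert (orthonormal) basis (ψ_i)_{i∈ℕ}, and let (λ_i)_{i∈ℕ} be real numbers with λ_i ≥ λ₀ for all i, for some λ₀ > 0. Let μ > 0, f ∈ H, and u_μ := Σ_i (1 + μ λ_i)^{-1} ⟨f, ψ_i⟩ ψ_i (this family is summable in H). Then u_μ ∈ ℍ¹ and, for every w ∈ ℍ¹, the series Σ_i λ_i ⟨u_μ, ψ_i⟩ ⟨w, ψ_i⟩ converges and ⟨u_μ, w⟩ + μ Σ_i λ_i ⟨u_μ, ψ_i⟩ ⟨w, ψ_i⟩ = ⟨f, w⟩. Moreover u_μ is the unique element of ℍ¹ with this property. -/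
open Real
open scoped RealInnerProductSpace

theorem parametric_problem_wellposed
    {H : Type*} [NormedAddCommGroup H] [InnerProductSpace ℝ H] [CompleteSpace H]
    (ψ : HilbertBasis ℕ ℝ H) (lam : ℕ → ℝ) (lam₀ : ℝ) (hlam₀ : 0 < lam₀)
    (hlam : ∀ i, lam₀ ≤ lam i) (μ : ℝ) (hμ : 0 < μ) (f : H)
    (uμ : H) (huμ : uμ = ∑' i : ℕ, ((1 + μ * lam i)⁻¹ * ⟪f, ψ i⟫) • ψ i) :
    Summable (fun i : ℕ => ((1 + μ * lam i)⁻¹ * ⟪f, ψ i⟫) • ψ i) ∧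
    Summable (fun i : ℕ => lam i * ⟪uμ, ψ i⟫ ^ 2) ∧
    (∀ w : H, Summable (fun i : ℕ => lam i * ⟪w, ψ i⟫ ^ 2) →
      Summable (fun i : ℕ => lam i * ⟪uμ, ψ i⟫ * ⟪w, ψ i⟫) ∧
      ⟪uμ, w⟫ + μ * ∑' i : ℕ, lam i * ⟪uμ, ψ i⟫ * ⟪w, ψ i⟫ = ⟪f, w⟫) ∧
    (∀ u' : H, Summable (fun i : ℕ => lam i * ⟪u', ψ i⟫ ^ 2) →
      (∀ w : H, Summable (fun i : ℕ => lam i * ⟪w, ψ i⟫ ^ 2) →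
        Summable (fun i : ℕ => lam i * ⟪u', ψ i⟫ * ⟪w, ψ i⟫) ∧
        ⟪u', w⟫ + μ * ∑' i : ℕ, lam i * ⟪u', ψ i⟫ * ⟪w, ψ i⟫ = ⟪f, w⟫) →
      u' = uμ) := by
  set c : ℕ → ℝ := fun i => (1 + μ * lam i)⁻¹ * ⟪f, ψ i⟫ with hc
  have hlpos : ∀ i, 0 < lam i := fun i => hlam₀.trans_le (hlam i)
  have hpos : ∀ i, 0 < 1 + μ * lam i := by
    intro i; have := mul_pos hμ (hlpos i); linarith
  have hij : ∀ i j, ⟪ψ i, ψ j⟫ = if i = j then 1 else 0 := fun i j =>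
    orthonormal_iff_ite.mp ψ.orthonormal i j
  have hcc : ∀ i, (1 + μ * lam i) * c i = ⟪f, ψ i⟫ := by
    intro i
    rw [hc, ← mul_assoc, mul_inv_cancel₀ (hpos i).ne', one_mul]
  have hf2 : Summable fun i => ⟪f, ψ i⟫ ^ 2 := by
    have := ψ.orthonormal.inner_products_summable (x := f)
    refine this.congr fun i => ?_
    rw [Real.norm_eq_abs, sq_abs, real_inner_comm]
  -- first conjunct
  have hsum1 : Summable fun i : ℕ => c i • ψ i := by
    have hc2 : Summable fun i => ‖c i‖ ^ 2 := by
      refine Summable.of_nonneg_of_le (fun i => by positivity) (fun i => ?_) hf2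
      have h1 : (1 + μ * lam i)⁻¹ ≤ 1 := by
        rw [inv_le_one_iff₀]; right
        have := mul_pos hμ (hlpos i); linarith
      have h0 : (0:ℝ) ≤ (1 + μ * lam i)⁻¹ := le_of_lt (inv_pos.mpr (hpos i))
      rw [Real.norm_eq_abs, hc, abs_mul, abs_of_nonneg h0]
      calc ((1 + μ * lam i)⁻¹ * |⟪f, ψ i⟫|) ^ 2
          ≤ (1 * |⟪f, ψ i⟫|) ^ 2 := by
            apply pow_le_pow_left₀ (by positivity)
            exact mul_le_mul_of_nonneg_right h1 (abs_nonneg _)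
        _ = ⟪f, ψ i⟫ ^ 2 := by rw [one_mul, sq_abs]
    exact (ψ.orthonormal.orthogonalFamily.summable_iff_norm_sq_summable c).mpr hc2
  have hsHS : HasSum (fun i => c i • ψ i) uμ := by
    rw [huμ]; exact hsum1.hasSum
  -- coefficients of uμ
  have hcoef : ∀ i, ⟪uμ, ψ i⟫ = c i := by
    intro i
    have h2 := (innerSL ℝ (ψ i)).hasSum hsHS
    have hfun : (fun j => (innerSL ℝ (ψ i)) (c j • ψ j)) = fun j => if j = i then c i else 0 := by
      funext j
      simp only [innerSL_apply_apply, real_inner_smul_right, hij i j]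
      rcases eq_or_ne j i with h | h
      · subst h; simp
      · rw [if_neg (Ne.symm h), mul_zero, if_neg h]
    rw [hfun] at h2
    have h4 : ⟪ψ i, uμ⟫ = c i := h2.unique (hasSum_ite_eq i (c i))
    rw [real_inner_comm]; exact h4
  -- second conjunct
  have hsum2 : Summable fun i : ℕ => lam i * ⟪uμ, ψ i⟫ ^ 2 := by
    refine Summable.of_nonneg_of_le
      (fun i => mul_nonneg (hlpos i).le (sq_nonneg _)) (fun i => ?_) (hf2.mul_left μ⁻¹)
    rw [hcoef i]
    have hfeq : ⟪f, ψ i⟫ ^ 2 = (1 + μ * lam i) ^ 2 * c i ^ 2 := by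
      rw [← hcc i]; ring
    have key : μ * (lam i * c i ^ 2) ≤ ⟪f, ψ i⟫ ^ 2 := by
      rw [hfeq]
      nlinarith [sq_nonneg (c i), mul_pos hμ (hlpos i),
        mul_nonneg (mul_nonneg hμ.le (hlpos i).le) (sq_nonneg (c i)),
        mul_nonneg (sq_nonneg (μ * lam i)) (sq_nonneg (c i))]
    calc lam i * c i ^ 2 = μ⁻¹ * (μ * (lam i * c i ^ 2)) := by
          rw [← mul_assoc, inv_mul_cancel₀ hμ.ne', one_mul]
      _ ≤ μ⁻¹ * ⟪f, ψ i⟫ ^ 2 := by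
          exact mul_le_mul_of_nonneg_left key (inv_pos.mpr hμ).le
  refine ⟨hsum1, hsum2, ?_, ?_⟩
  · -- weak formulation
    intro w hw
    have hsum3 : Summable fun i : ℕ => lam i * ⟪uμ, ψ i⟫ * ⟪w, ψ i⟫ := by
      apply Summable.of_abs
      refine Summable.of_nonneg_of_le (fun i => abs_nonneg _) (fun i => ?_)
        (((hsum2.add hw).mul_left (1/2)))
      have hl := (hlpos i).le
      rw [abs_mul, abs_mul, abs_of_nonneg hl]
      have h1 : |⟪uμ, ψ i⟫| * |⟪w, ψ i⟫| ≤ (⟪uμ, ψ i⟫ ^ 2 + ⟪w, ψ i⟫ ^ 2) / 2 := by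
        nlinarith [sq_nonneg (|⟪uμ, ψ i⟫| - |⟪w, ψ i⟫|), sq_abs ⟪uμ, ψ i⟫, sq_abs ⟪w, ψ i⟫]
      calc lam i * |⟪uμ, ψ i⟫| * |⟪w, ψ i⟫|
          ≤ lam i * ((⟪uμ, ψ i⟫ ^ 2 + ⟪w, ψ i⟫ ^ 2) / 2) := by
            rw [mul_assoc]
            exact mul_le_mul_of_nonneg_left h1 hl
        _ = 1/2 * (lam i * ⟪uμ, ψ i⟫ ^ 2 + lam i * ⟪w, ψ i⟫ ^ 2) := by ring
    refine ⟨hsum3, ?_⟩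
    have hsw : HasSum (fun i => ⟪uμ, ψ i⟫ * ⟪ψ i, w⟫) ⟪uμ, w⟫ := ψ.hasSum_inner_mul_inner uμ w
    have hsf : HasSum (fun i => ⟪f, ψ i⟫ * ⟪ψ i, w⟫) ⟪f, w⟫ := ψ.hasSum_inner_mul_inner f w
    have hS : HasSum (fun i => μ * (lam i * ⟪uμ, ψ i⟫ * ⟪w, ψ i⟫))
        (μ * ∑' i, lam i * ⟪uμ, ψ i⟫ * ⟪w, ψ i⟫) := hsum3.hasSum.mul_left μ
    have hsum_eq : (fun i => ⟪uμ, ψ i⟫ * ⟪ψ i, w⟫ + μ * (lam i * ⟪uμ, ψ i⟫ * ⟪w, ψ i⟫))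
        = fun i => ⟪f, ψ i⟫ * ⟪ψ i, w⟫ := by
      funext i
      rw [hcoef i, real_inner_comm w (ψ i)]
      linear_combination ⟪w, ψ i⟫ * hcc i
    have := (hsw.add hS)
    rw [hsum_eq] at this
    exact this.unique hsf
  · -- uniqueness
    intro u' _ hP
    have hcoef' : ∀ j, ⟪u', ψ j⟫ = c j := by
      intro j
      have hwj : Summable (fun i => lam i * ⟪ψ j, ψ i⟫ ^ 2) := by
        have he : (fun i => lam i * ⟪ψ j, ψ i⟫ ^ 2) = fun i => if i = j then lam j else 0 := by
          funext i
          rw [hij j i]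
          rcases eq_or_ne i j with h | h
          · subst h; simp
          · rw [if_neg (Ne.symm h), if_neg h]; ring
        rw [he]
        exact (hasSum_ite_eq j (lam j)).summable
      obtain ⟨-, heq⟩ := hP (ψ j) hwj
      have htsum : ∑' i, lam i * ⟪u', ψ i⟫ * ⟪ψ j, ψ i⟫ = lam j * ⟪u', ψ j⟫ := by
        have h5 : (fun i => lam i * ⟪u', ψ i⟫ * ⟪ψ j, ψ i⟫)
            = fun i => if i = j then lam j * ⟪u', ψ j⟫ else 0 := by
          funext i
          rw [hij j i]
          rcases eq_or_ne i j with h | h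
          · subst h; simp
          · rw [if_neg (Ne.symm h), mul_zero, if_neg h]
        rw [h5]
        exact (hasSum_ite_eq j (lam j * ⟪u', ψ j⟫)).tsum_eq
      rw [htsum] at heq
      -- heq : ⟪u', ψ j⟫ + μ * (lam j * ⟪u', ψ j⟫) = ⟪f, ψ j⟫
      have hgoal : (1 + μ * lam j) * ⟪u', ψ j⟫ = (1 + μ * lam j) * c j := by
        rw [hcc j]; linear_combination heq
      exact mul_left_cancel₀ (hpos j).ne' hgoal
    apply ψ.repr.injective
    apply lp.ext
    funext i
    rw [ψ.repr_apply_apply, ψ.repr_apply_apply, real_inner_comm u' (ψ i),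
      real_inner_comm uμ (ψ i), hcoef', hcoef]
end

section
/- Let f : (0,1)² → ℝ be the checkerboard function given by f(x₁, x₂) = 1 if (x₁ − 1/2)(x₂ − 1/2) > 0 and f(x₁, x₂) = 0 otherwise, and for positive integers m, n let a_{mn} = 4 ∫₀¹∫₀¹ f(x₁, x₂) sin(mπx₁) sin(nπx₂) dx₁ dx₂ be its Fourier sine coefficients. Then for every real t with t < 1/2, the double series Σ_{m≥1} Σ_{n≥1} (π²(m² + n²))^t a_{mn}² converges; that is, f belongs to the spectral fractional Sobolev space ℍ^t((0,1)²) for every t < 1/2. -/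
open Real MeasureTheory

noncomputable def checkerboard (x₁ x₂ : ℝ) : ℝ :=
  if (x₁ - 1 / 2) * (x₂ - 1 / 2) > 0 then 1 else 0

noncomputable def checkerboardCoeff (m n : ℕ) : ℝ :=
  4 * ∫ x₁ in (0:ℝ)..1, ∫ x₂ in (0:ℝ)..1,
      checkerboard x₁ x₂ * Real.sin ((m : ℝ) * Real.pi * x₁) *
        Real.sin ((n : ℝ) * Real.pi * x₂)

lemma ae_ne (c : ℝ) : ∀ᵐ x : ℝ, x ≠ c := by
  rw [MeasureTheory.ae_iff]; simp [measure_singleton]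

lemma split01 {f g h : ℝ → ℝ}
    (hg : IntervalIntegrable g volume 0 (1/2))
    (hh : IntervalIntegrable h volume (1/2) 1)
    (h1 : ∀ x ∈ Set.Ioo (0:ℝ) (1/2), f x = g x)
    (h2 : ∀ x ∈ Set.Ioo (1/2:ℝ) 1, f x = h x) :
    ∫ x in (0:ℝ)..1, f x = (∫ x in (0:ℝ)..(1/2), g x) + ∫ x in (1/2:ℝ)..1, h x := by
  have huIoc1 : Set.uIoc (0:ℝ) (1/2) = Set.Ioc 0 (1/2) := Set.uIoc_of_le (by norm_num)
  have huIoc2 : Set.uIoc (1/2:ℝ) 1 = Set.Ioc (1/2) 1 := Set.uIoc_of_le (by norm_num)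
  have e1 : ∫ x in (0:ℝ)..(1/2), f x = ∫ x in (0:ℝ)..(1/2), g x := by
    apply intervalIntegral.integral_congr_ae
    filter_upwards [ae_ne (1/2 : ℝ)] with x hx hmem
    rw [huIoc1] at hmem
    exact h1 x ⟨hmem.1, lt_of_le_of_ne hmem.2 hx⟩
  have e2 : ∫ x in (1/2:ℝ)..1, f x = ∫ x in (1/2:ℝ)..1, h x := by
    apply intervalIntegral.integral_congr_ae
    filter_upwards [ae_ne (1 : ℝ)] with x hx hmem
    rw [huIoc2] at hmem
    exact h2 x ⟨hmem.1, lt_of_le_of_ne hmem.2 hx⟩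
  have hf1 : IntervalIntegrable f volume 0 (1/2) := by
    apply hg.congr_ae
    filter_upwards [ae_restrict_mem measurableSet_uIoc,
      (ae_ne (1/2:ℝ)).filter_mono (ae_mono Measure.restrict_le_self)] with x hmem hx
    rw [huIoc1] at hmem
    exact (h1 x ⟨hmem.1, lt_of_le_of_ne hmem.2 hx⟩).symm
  have hf2 : IntervalIntegrable f volume (1/2) 1 := by
    apply hh.congr_ae
    filter_upwards [ae_restrict_mem measurableSet_uIoc,
      (ae_ne (1:ℝ)).filter_mono (ae_mono Measure.restrict_le_self)] with x hmem hx
    rw [huIoc2] at hmem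
    exact (h2 x ⟨hmem.1, lt_of_le_of_ne hmem.2 hx⟩).symm
  rw [← intervalIntegral.integral_add_adjacent_intervals hf1 hf2, e1, e2]

noncomputable def I1 (k : ℕ) : ℝ := ∫ x in (0:ℝ)..(1/2), Real.sin ((k : ℝ) * Real.pi * x)
noncomputable def I2 (k : ℕ) : ℝ := ∫ x in (1/2:ℝ)..1, Real.sin ((k : ℝ) * Real.pi * x)

lemma cb_lt (x₁ x₂ : ℝ) (h1 : x₁ < 1/2) (h2 : x₂ < 1/2) : checkerboard x₁ x₂ = 1 := by
  rw [checkerboard, if_pos (mul_pos_of_neg_of_neg (by linarith) (by linarith))]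

lemma cb_gt (x₁ x₂ : ℝ) (h1 : 1/2 < x₁) (h2 : 1/2 < x₂) : checkerboard x₁ x₂ = 1 := by
  rw [checkerboard, if_pos (mul_pos (by linarith) (by linarith))]

lemma cb_mixed1 (x₁ x₂ : ℝ) (h1 : x₁ < 1/2) (h2 : 1/2 < x₂) : checkerboard x₁ x₂ = 0 := by
  rw [checkerboard, if_neg]
  push_neg
  exact le_of_lt (mul_neg_of_neg_of_pos (by linarith) (by linarith))

lemma cb_mixed2 (x₁ x₂ : ℝ) (h1 : 1/2 < x₁) (h2 : x₂ < 1/2) : checkerboard x₁ x₂ = 0 := by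
  rw [checkerboard, if_neg]
  push_neg
  exact le_of_lt (mul_neg_of_pos_of_neg (by linarith) (by linarith))

lemma contSin (k : ℕ) : Continuous (fun x : ℝ => Real.sin ((k : ℝ) * Real.pi * x)) := by
  fun_prop

lemma inner_integral (m n : ℕ) (x₁ : ℝ) :
    (∫ x₂ in (0:ℝ)..1, checkerboard x₁ x₂ * Real.sin ((m : ℝ) * Real.pi * x₁) *
        Real.sin ((n : ℝ) * Real.pi * x₂))
    = if x₁ < 1/2 then Real.sin ((m : ℝ) * Real.pi * x₁) * I1 n
      else if 1/2 < x₁ then Real.sin ((m : ℝ) * Real.pi * x₁) * I2 n else 0 := by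
  rcases lt_trichotomy x₁ (1/2 : ℝ) with hlt | heq | hgt
  · rw [if_pos hlt]
    rw [split01 (f := fun x₂ => checkerboard x₁ x₂ * Real.sin ((m : ℝ) * Real.pi * x₁) *
          Real.sin ((n : ℝ) * Real.pi * x₂))
        (g := fun x₂ => Real.sin ((m : ℝ) * Real.pi * x₁) * Real.sin ((n : ℝ) * Real.pi * x₂))
        (h := fun _ => 0)
        ((continuous_const.mul (contSin n)).intervalIntegrable _ _)
        (continuous_const.intervalIntegrable _ _)
        (fun x hx => by simp only [cb_lt x₁ x hlt hx.2]; ring)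
        (fun x hx => by simp only [cb_mixed1 x₁ x hlt hx.1]; ring)]
    rw [intervalIntegral.integral_const_mul, intervalIntegral.integral_zero, I1, add_zero]
  · subst heq
    norm_num
    rw [intervalIntegral.integral_congr (g := fun _ => 0)]
    · simp
    · intro x _
      simp only [checkerboard]
      rw [if_neg (by norm_num)]
      ring
  · rw [if_neg (not_lt.mpr hgt.le), if_pos hgt]
    rw [split01 (f := fun x₂ => checkerboard x₁ x₂ * Real.sin ((m : ℝ) * Real.pi * x₁) *
          Real.sin ((n : ℝ) * Real.pi * x₂))
        (g := fun _ => 0)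
        (h := fun x₂ => Real.sin ((m : ℝ) * Real.pi * x₁) * Real.sin ((n : ℝ) * Real.pi * x₂))
        (continuous_const.intervalIntegrable _ _)
        ((continuous_const.mul (contSin n)).intervalIntegrable _ _)
        (fun x hx => by simp only [cb_mixed2 x₁ x hgt hx.2]; ring)
        (fun x hx => by simp only [cb_gt x₁ x hgt hx.1]; ring)]
    rw [intervalIntegral.integral_const_mul, intervalIntegral.integral_zero, I2, zero_add]

lemma coeff_eq (m n : ℕ) :
    checkerboardCoeff m n = 4 * (I1 m * I1 n + I2 m * I2 n) := by
  rw [checkerboardCoeff]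
  congr 1
  rw [split01 (g := fun x₁ => Real.sin ((m : ℝ) * Real.pi * x₁) * I1 n)
      (h := fun x₁ => Real.sin ((m : ℝ) * Real.pi * x₁) * I2 n)
      (((contSin m).mul continuous_const).intervalIntegrable _ _)
      (((contSin m).mul continuous_const).intervalIntegrable _ _)
      (fun x hx => by rw [inner_integral, if_pos hx.2])
      (fun x hx => by rw [inner_integral, if_neg (not_lt.mpr hx.1.le), if_pos hx.1])]
  rw [intervalIntegral.integral_mul_const, intervalIntegral.integral_mul_const]
  simp [I1, I2]

lemma I1_bound (k : ℕ) (hk : 1 ≤ k) : |I1 k| ≤ 2 / ((k : ℝ) * Real.pi) := by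
  have hc : ((k:ℝ) * Real.pi) ≠ 0 := by positivity
  have hcpos : (0:ℝ) < (k:ℝ) * Real.pi := by positivity
  have : I1 k = ((k:ℝ) * Real.pi)⁻¹ * (Real.cos (((k:ℝ) * Real.pi) * 0) - Real.cos (((k:ℝ) * Real.pi) * (1/2))) := by
    rw [I1]
    have := intervalIntegral.integral_comp_mul_left (a := (0:ℝ)) (b := 1/2) (fun x => Real.sin x) hc
    simp only [smul_eq_mul] at this
    rw [this, integral_sin]
  have hb : ∀ y z : ℝ, |Real.cos y - Real.cos z| ≤ 2 := by
    intro y z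
    have h1 := Real.neg_one_le_cos y
    have h2 := Real.cos_le_one y
    have h3 := Real.neg_one_le_cos z
    have h4 := Real.cos_le_one z
    rw [abs_le]; constructor <;> linarith
  rw [this, abs_mul, abs_inv, abs_of_pos hcpos]
  calc ((k:ℝ) * Real.pi)⁻¹ * |Real.cos (((k:ℝ) * Real.pi) * 0) - Real.cos (((k:ℝ) * Real.pi) * (1/2))|
      ≤ ((k:ℝ) * Real.pi)⁻¹ * 2 := mul_le_mul_of_nonneg_left (hb _ _) (inv_nonneg.mpr hcpos.le)
    _ = 2 / ((k:ℝ) * Real.pi) := (div_eq_inv_mul 2 _).symm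

lemma I2_bound (k : ℕ) (hk : 1 ≤ k) : |I2 k| ≤ 2 / ((k : ℝ) * Real.pi) := by
  have hc : ((k:ℝ) * Real.pi) ≠ 0 := by positivity
  have hcpos : (0:ℝ) < (k:ℝ) * Real.pi := by positivity
  have : I2 k = ((k:ℝ) * Real.pi)⁻¹ * (Real.cos (((k:ℝ) * Real.pi) * (1/2)) - Real.cos (((k:ℝ) * Real.pi) * 1)) := by
    rw [I2]
    have := intervalIntegral.integral_comp_mul_left (a := (1/2:ℝ)) (b := 1) (fun x => Real.sin x) hc
    simp only [smul_eq_mul] at this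
    rw [this, integral_sin]
  have hb : ∀ y z : ℝ, |Real.cos y - Real.cos z| ≤ 2 := by
    intro y z
    have h1 := Real.neg_one_le_cos y
    have h2 := Real.cos_le_one y
    have h3 := Real.neg_one_le_cos z
    have h4 := Real.cos_le_one z
    rw [abs_le]; constructor <;> linarith
  rw [this, abs_mul, abs_inv, abs_of_pos hcpos]
  calc ((k:ℝ) * Real.pi)⁻¹ * |Real.cos (((k:ℝ) * Real.pi) * (1/2)) - Real.cos (((k:ℝ) * Real.pi) * 1)|
      ≤ ((k:ℝ) * Real.pi)⁻¹ * 2 := mul_le_mul_of_nonneg_left (hb _ _) (inv_nonneg.mpr hcpos.le)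
    _ = 2 / ((k:ℝ) * Real.pi) := (div_eq_inv_mul 2 _).symm

lemma pointwise_bound (t t' : ℝ) (ht0 : 0 ≤ t') (htt : t ≤ t') (M N : ℝ)
    (hM : 1 ≤ M) (hN : 1 ≤ N) (a : ℝ)
    (ha : a ^ 2 ≤ 1024 / (Real.pi ^ 4 * M ^ 2 * N ^ 2)) :
    (Real.pi ^ 2 * (M ^ 2 + N ^ 2)) ^ t * a ^ 2 ≤
      (1024 * (2 * Real.pi ^ 2) ^ t' / Real.pi ^ 4) *
        (M ^ (2 * t' - 2) * N ^ (2 * t' - 2)) := by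
  have hMpos : (0:ℝ) < M := lt_of_lt_of_le one_pos hM
  have hNpos : (0:ℝ) < N := lt_of_lt_of_le one_pos hN
  have hpi := Real.pi_gt_three
  have h9 : (9:ℝ) ≤ Real.pi ^ 2 := by nlinarith
  have hMsq : (1:ℝ) ≤ M ^ 2 := by nlinarith
  have hNsq : (1:ℝ) ≤ N ^ 2 := by nlinarith
  have hbase : 1 ≤ Real.pi ^ 2 * (M ^ 2 + N ^ 2) := by nlinarith
  have h1 : (Real.pi ^ 2 * (M ^ 2 + N ^ 2)) ^ t ≤ (Real.pi ^ 2 * (M ^ 2 + N ^ 2)) ^ t' :=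
    Real.rpow_le_rpow_of_exponent_le hbase htt
  have h2 : (Real.pi ^ 2 * (M ^ 2 + N ^ 2)) ^ t' ≤ ((2 * Real.pi ^ 2) * (M ^ 2 * N ^ 2)) ^ t' := by
    apply Real.rpow_le_rpow (by positivity) _ ht0
    have e1 : (0:ℝ) ≤ M ^ 2 * (N ^ 2 - 1) := mul_nonneg (by positivity) (by linarith)
    have e2 : (0:ℝ) ≤ N ^ 2 * (M ^ 2 - 1) := mul_nonneg (by positivity) (by linarith)
    have hpisq : (0:ℝ) < Real.pi ^ 2 := by positivity
    nlinarith [mul_nonneg hpisq.le (add_nonneg e1 e2)]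
  have hM2 : (M ^ 2 : ℝ) ^ t' = M ^ (2 * t') := by
    rw [← Real.rpow_natCast M 2, ← Real.rpow_mul hMpos.le]
    norm_num
  have hN2 : (N ^ 2 : ℝ) ^ t' = N ^ (2 * t') := by
    rw [← Real.rpow_natCast N 2, ← Real.rpow_mul hNpos.le]
    norm_num
  have h3 : ((2 * Real.pi ^ 2) * (M ^ 2 * N ^ 2)) ^ t'
      = (2 * Real.pi ^ 2) ^ t' * (M ^ (2 * t') * N ^ (2 * t')) := by
    rw [Real.mul_rpow (by positivity) (by positivity),
      Real.mul_rpow (sq_nonneg M) (sq_nonneg N), hM2, hN2]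
  have key : (Real.pi ^ 2 * (M ^ 2 + N ^ 2)) ^ t
      ≤ (2 * Real.pi ^ 2) ^ t' * (M ^ (2 * t') * N ^ (2 * t')) := by
    rw [← h3]; exact h1.trans h2
  calc (Real.pi ^ 2 * (M ^ 2 + N ^ 2)) ^ t * a ^ 2
      ≤ ((2 * Real.pi ^ 2) ^ t' * (M ^ (2 * t') * N ^ (2 * t')))
          * (1024 / (Real.pi ^ 4 * M ^ 2 * N ^ 2)) := by
        apply mul_le_mul key ha (sq_nonneg a) (by positivity)
    _ = (1024 * (2 * Real.pi ^ 2) ^ t' / Real.pi ^ 4) *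
          (M ^ (2 * t' - 2) * N ^ (2 * t' - 2)) := by
        rw [Real.rpow_sub hMpos, Real.rpow_sub hNpos]
        rw [show ((2:ℝ)) = ((2:ℕ):ℝ) by norm_num, Real.rpow_natCast M 2, Real.rpow_natCast N 2]
        field_simp


lemma coeff_sq (m n : ℕ) (hm : 1 ≤ m) (hn : 1 ≤ n) :
    checkerboardCoeff m n ^ 2 ≤ 1024 / (Real.pi ^ 4 * (m:ℝ) ^ 2 * (n:ℝ) ^ 2) := by
  have hm' : (1:ℝ) ≤ (m:ℝ) := by exact_mod_cast hm
  have hn' : (1:ℝ) ≤ (n:ℝ) := by exact_mod_cast hn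
  have hpi := Real.pi_pos
  have habs : |checkerboardCoeff m n| ≤ 32 / ((m:ℝ) * (n:ℝ) * Real.pi ^ 2) := by
    have b1 := I1_bound m hm
    have b2 := I1_bound n hn
    have b3 := I2_bound m hm
    have b4 := I2_bound n hn
    rw [coeff_eq]
    calc |4 * (I1 m * I1 n + I2 m * I2 n)| = 4 * |I1 m * I1 n + I2 m * I2 n| := by
          rw [abs_mul]; norm_num
      _ ≤ 4 * (|I1 m| * |I1 n| + |I2 m| * |I2 n|) := by
          refine mul_le_mul_of_nonneg_left ?_ (by norm_num)
          refine (abs_add_le _ _).trans ?_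
          rw [abs_mul, abs_mul]
      _ ≤ 4 * ((2 / ((m:ℝ) * Real.pi)) * (2 / ((n:ℝ) * Real.pi)) +
            (2 / ((m:ℝ) * Real.pi)) * (2 / ((n:ℝ) * Real.pi))) := by
          gcongr
      _ = 32 / ((m:ℝ) * (n:ℝ) * Real.pi ^ 2) := by
          field_simp
          ring
  calc checkerboardCoeff m n ^ 2 = |checkerboardCoeff m n| ^ 2 := (sq_abs _).symm
    _ ≤ (32 / ((m:ℝ) * (n:ℝ) * Real.pi ^ 2)) ^ 2 :=
        pow_le_pow_left₀ (abs_nonneg _) habs 2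
    _ = 1024 / (Real.pi ^ 4 * (m:ℝ) ^ 2 * (n:ℝ) ^ 2) := by
        field_simp
        ring

set_option maxHeartbeats 1000000 in
theorem checkerboard_in_Ht (t : ℝ) (ht : t < 1 / 2) :
    Summable (fun p : ℕ × ℕ =>
      (Real.pi ^ 2 * (((p.1 + 1 : ℕ) : ℝ) ^ 2 + ((p.2 + 1 : ℕ) : ℝ) ^ 2)) ^ t *
        checkerboardCoeff (p.1 + 1) (p.2 + 1) ^ 2) := by
  set t' := max t 0 with hdef
  have ht' : t' < 1 / 2 := max_lt ht (by norm_num)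
  have ht0 : 0 ≤ t' := le_max_right _ _
  have hsum1 : Summable (fun k : ℕ => (k:ℝ) ^ (2 * t' - 2)) :=
    Real.summable_nat_rpow.mpr (by linarith)
  have hsum : Summable (fun k : ℕ => ((k + 1 : ℕ) : ℝ) ^ (2 * t' - 2)) := by
    have hinj : Function.Injective (fun k : ℕ => k + 1) := fun a b h => by
      simpa using h
    have := hsum1.comp_injective hinj
    simpa [Function.comp_def] using this
  have hprod : Summable (fun p : ℕ × ℕ =>
      ((p.1 + 1 : ℕ) : ℝ) ^ (2 * t' - 2) * ((p.2 + 1 : ℕ) : ℝ) ^ (2 * t' - 2)) :=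
    hsum.mul_of_nonneg hsum (fun k => Real.rpow_nonneg (by positivity) _)
      (fun k => Real.rpow_nonneg (by positivity) _)
  refine Summable.of_nonneg_of_le ?_ ?_
    (hprod.mul_left (1024 * (2 * Real.pi ^ 2) ^ t' / Real.pi ^ 4))
  · intro p
    have h1 : (0:ℝ) < Real.pi ^ 2 * (((p.1 + 1 : ℕ) : ℝ) ^ 2 + ((p.2 + 1 : ℕ) : ℝ) ^ 2) := by
      positivity
    exact mul_nonneg (Real.rpow_nonneg h1.le t) (sq_nonneg _)
  · intro p
    exact pointwise_bound t t' ht0 (le_max_left _ _) _ _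
      (by exact_mod_cast Nat.succ_le_succ (Nat.zero_le p.1))
      (by exact_mod_cast Nat.succ_le_succ (Nat.zero_le p.2)) _
      (coeff_sq _ _ (by omega) (by omega))
end
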